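/- Let p(·) be a measurable exponent with 0 < p₋ ≤ p₊ < ∞, b a slowly varying function, θ with p₊ < θ < ∞, and (A_i)_{i∈ℕ} pairwise disjoint measurable sets in a probability space. Then ∑_i ‖χ_{A_i}‖_{p(·)}^θ γ_b^θ(‖χ_{A_i}‖_{p(·)}) ≲ ‖∑_i χ_{A_i}‖_{p(·)}^θ γ_b^θ(‖∑_i χ_{A_i}‖_{p(·)}). -/

import Mathlib

open MeasureTheory Set ENNReal Filter Topology

noncomputable section

/-- A measurable function `b : [1,∞) → (0,∞)` is slowly varying if for every `ε > 0`,
`t ^ ε * b t` is equivalent (up to multiplicative constants) to a nondecreasing function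
and `t ^ (-ε) * b t` is equivalent to a nonincreasing function on `[1,∞)`. -/
def SlowlyVarying (b : ℝ → ℝ) : Prop :=
  (∀ t : ℝ, 1 ≤ t → 0 < b t) ∧
  ∀ ε : ℝ, 0 < ε →
    ((∃ g : ℝ → ℝ, MonotoneOn g (Set.Ici 1) ∧ ∃ c > (0:ℝ), ∃ C > (0:ℝ),
        ∀ t : ℝ, 1 ≤ t → c * g t ≤ t ^ ε * b t ∧ t ^ ε * b t ≤ C * g t) ∧
     (∃ g : ℝ → ℝ, AntitoneOn g (Set.Ici 1) ∧ ∃ c > (0:ℝ), ∃ C > (0:ℝ),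
        ∀ t : ℝ, 1 ≤ t → c * g t ≤ t ^ (-ε) * b t ∧ t ^ (-ε) * b t ≤ C * g t))

/-- `γ_b(t) = b (max {t, t⁻¹})` for `t > 0`. -/
def gammaB (b : ℝ → ℝ) (t : ℝ) : ℝ := b (max t t⁻¹)

variable {Ω : Type*} [MeasurableSpace Ω]

/-- The variable Lebesgue quasi-norm
`‖f‖_{p(·)} = inf {λ > 0 : ∫ (|f|/λ)^{p(·)} dμ ≤ 1}`. -/
def vLpNorm (μ : Measure Ω) (p : Ω → ℝ) (f : Ω → ℝ) : ℝ :=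
  sInf {lam : ℝ | 0 < lam ∧ ∫⁻ ω, ENNReal.ofReal ((|f ω| / lam) ^ p ω) ∂μ ≤ 1}

/-- `f ∈ L_{p(·)}` : the modular is finite for some `λ > 0`. -/
def MemVLp (μ : Measure Ω) (p : Ω → ℝ) (f : Ω → ℝ) : Prop :=
  ∃ lam > (0:ℝ), ∫⁻ ω, ENNReal.ofReal ((|f ω| / lam) ^ p ω) ∂μ ≤ 1

/-- `‖χ_A‖_{p(·)}`. -/
def chiNorm (μ : Measure Ω) (p : Ω → ℝ) (A : Set Ω) : ℝ :=
  vLpNorm μ p (A.indicator 1)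

/-- The variable Lorentz–Karamata quasi-norm `‖f‖_{p(·),q,b}` (with `q ∈ (0,∞]`). -/
def vLKNorm (μ : Measure Ω) (p : Ω → ℝ) (q : ℝ≥0∞) (b : ℝ → ℝ) (f : Ω → ℝ) : ℝ≥0∞ :=
  if q = ∞ then
    ⨆ t ∈ Set.Ioi (0:ℝ), ENNReal.ofReal
      (t * chiNorm μ p {ω | t < |f ω|} * gammaB b (chiNorm μ p {ω | t < |f ω|}))
  else
    (∫⁻ t in Set.Ioi (0:ℝ), ENNReal.ofReal
      ((t * chiNorm μ p {ω | t < |f ω|} * gammaB b (chiNorm μ p {ω | t < |f ω|})) ^ q.toReal / t))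
      ^ (1 / q.toReal)

/-! Write `s = ‖χ_{⋃ A_i}‖_{p(·)} ≤ 1`. Since `p ≤ p₊`, rescaling `λ` shows
`‖χ_E‖^{p₊} ≤ λ^{p₊} ∫_E λ^{-p}` whenever that modular is at most `1`; evaluating at an admissible
`λ` for the union and summing over the disjoint `A_i` gives `∑ ‖χ_{A_i}‖^{p₊} ≤ λ^{p₊}`, hence
`≤ s^{p₊}`. Because `θ > p₊`, slow variation of `b` makes `t^{θ-p₊} γ_b(t)^θ` almost increasing on
`(0, 1]`, so
`‖χ_{A_i}‖^θ γ_b^θ(‖χ_{A_i}‖) ≲ s^{θ-p₊} γ_b^θ(s) ‖χ_{A_i}‖^{p₊}`; now sum over `i`. -/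

theorem le_ofReal_sInf_rpow {T : Set ℝ} (hT : T.Nonempty) (hT0 : ∀ x ∈ T, 0 ≤ x) {r : ℝ}
    (hr : 0 ≤ r) {a : ℝ≥0∞} (h : ∀ x ∈ T, a ≤ ENNReal.ofReal (x ^ r)) :
    a ≤ ENNReal.ofReal (sInf T ^ r) := by
  have hmono : Monotone fun x : ℝ => ENNReal.ofReal x ^ r :=
    fun x y hxy => ENNReal.rpow_le_rpow (ENNReal.ofReal_le_ofReal hxy) hr
  have hcont : Continuous fun x : ℝ => ENNReal.ofReal x ^ r :=
    ENNReal.continuous_rpow_const.comp ENNReal.continuous_ofReal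
  rw [← ENNReal.ofReal_rpow_of_nonneg (Real.sInf_nonneg hT0) hr,
    hmono.map_csInf_of_continuousAt hcont.continuousAt hT ⟨0, hT0⟩]
  refine le_sInf (forall_mem_image.2 fun x hx => ?_)
  rw [ENNReal.ofReal_rpow_of_nonneg (hT0 x hx) hr]
  exact h x hx

theorem SlowlyVarying.exists_le_mul_div_rpow {b : ℝ → ℝ} (hb : SlowlyVarying b) {ε : ℝ}
    (hε : 0 < ε) : ∃ K > 0, ∀ x y : ℝ, 1 ≤ x → x ≤ y → b y ≤ K * (y / x) ^ ε * b x := by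
  obtain ⟨g, hg, c, hc, C, hC, hgb⟩ := (hb.2 ε hε).2
  refine ⟨C / c, by positivity, fun x y hx hxy => ?_⟩
  have hx0 : 0 < x := one_pos.trans_le hx
  have hy0 : 0 < y := hx0.trans_le hxy
  have hdecay : y ^ (-ε) * b y ≤ C / c * (x ^ (-ε) * b x) :=
    calc y ^ (-ε) * b y ≤ C * g y := (hgb y (hx.trans hxy)).2
      _ ≤ C * g x := by gcongr; exact hg hx (hx.trans hxy) hxy
      _ ≤ C / c * (x ^ (-ε) * b x) := by
        rw [div_mul_eq_mul_div, le_div_iff₀ hc, mul_assoc]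
        exact mul_le_mul_of_nonneg_left (by linarith [(hgb x hx).1]) hC.le
  calc b y = y ^ ε * (y ^ (-ε) * b y) := by
        rw [← mul_assoc, ← Real.rpow_add hy0, add_neg_cancel, Real.rpow_zero, one_mul]
    _ ≤ y ^ ε * (C / c * (x ^ (-ε) * b x)) := by gcongr
    _ = C / c * (y / x) ^ ε * b x := by
        rw [Real.div_rpow hy0.le hx0.le, Real.rpow_neg hx0.le]
        ring

theorem gammaB_of_le_one (b : ℝ → ℝ) {t : ℝ} (ht0 : 0 ≤ t) (ht1 : t ≤ 1) :
    gammaB b t = b t⁻¹ := by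
  rw [gammaB, max_eq_right]
  rcases ht0.eq_or_lt with rfl | ht0
  · simp
  · exact ht1.trans (one_le_inv₀ ht0 |>.2 ht1)

-- Equivalently, `t ^ (θ - q) * γ_b(t) ^ θ` is almost increasing on `(0, 1]`: a slowly varying
-- factor cannot defeat a positive power of `t`.
theorem SlowlyVarying.exists_rpow_mul_gammaB_rpow_le {b : ℝ → ℝ} (hb : SlowlyVarying b)
    {q θ : ℝ} (hq : 0 < q) (hqθ : q < θ) :
    ∃ K > 0, ∀ c s : ℝ, 0 ≤ c → c ≤ s → s ≤ 1 →
      c ^ θ * gammaB b c ^ θ ≤ K * (s ^ (θ - q) * gammaB b s ^ θ) * c ^ q := by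
  have hθ : 0 < θ := hq.trans hqθ
  obtain ⟨K, hK, hKb⟩ := hb.exists_le_mul_div_rpow (ε := (θ - q) / θ) (by bound)
  refine ⟨K ^ θ, by positivity, fun c s hc hcs hs1 => ?_⟩
  rcases hc.eq_or_lt with rfl | hc
  · simp [Real.zero_rpow hθ.ne', Real.zero_rpow hq.ne']
  have hs : 0 < s := hc.trans_le hcs
  have hbc : b c⁻¹ ≤ K * (s / c) ^ ((θ - q) / θ) * b s⁻¹ := by
    have := hKb s⁻¹ c⁻¹ ((one_le_inv₀ hs).2 hs1) (inv_anti₀ hc hcs)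
    rwa [inv_div_inv] at this
  rw [gammaB_of_le_one b hc.le (hcs.trans hs1), gammaB_of_le_one b hs.le hs1]
  calc c ^ θ * b c⁻¹ ^ θ ≤ c ^ θ * (K * (s / c) ^ ((θ - q) / θ) * b s⁻¹) ^ θ := by
        have := hb.1 c⁻¹ ((one_le_inv₀ hc).2 (hcs.trans hs1))
        gcongr
    _ = K ^ θ * (s ^ (θ - q) * b s⁻¹ ^ θ) * c ^ q := by
        have := hb.1 s⁻¹ ((one_le_inv₀ hs).2 hs1)
        rw [Real.mul_rpow (by positivity) this.le, Real.mul_rpow hK.le (by positivity),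
          ← Real.rpow_mul (by positivity), div_mul_cancel₀ _ hθ.ne',
          Real.div_rpow hs.le hc.le, Real.rpow_sub hc]
        field_simp

def indicatorModular (μ : Measure Ω) (p : Ω → ℝ) (E : Set Ω) (lam : ℝ) : ℝ≥0∞ :=
  ∫⁻ ω in E, ENNReal.ofReal ((1 / lam) ^ p ω) ∂μ

section IndicatorModular

variable {μ : Measure Ω} {p : Ω → ℝ} {E : Set Ω}

theorem lintegral_indicator_div_rpow (hp : ∀ᵐ ω ∂μ, 0 < p ω) (hE : MeasurableSet E)
    (lam : ℝ) :
    ∫⁻ ω, ENNReal.ofReal ((|E.indicator (1 : Ω → ℝ) ω| / lam) ^ p ω) ∂μ =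
      indicatorModular μ p E lam := by
  rw [indicatorModular, ← lintegral_indicator hE]
  refine lintegral_congr_ae (hp.mono fun ω hω => ?_)
  by_cases h : ω ∈ E
  · simp [h]
  · simp [h, Real.zero_rpow hω.ne']

theorem chiNorm_eq_sInf (hp : ∀ᵐ ω ∂μ, 0 < p ω) (hE : MeasurableSet E) :
    chiNorm μ p E = sInf {lam | 0 < lam ∧ indicatorModular μ p E lam ≤ 1} := by
  simp only [chiNorm, vLpNorm, lintegral_indicator_div_rpow hp hE]

theorem chiNorm_nonneg : 0 ≤ chiNorm μ p E :=
  Real.sInf_nonneg fun _ h => h.1.le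

theorem indicatorModular_one_le [IsProbabilityMeasure μ] : indicatorModular μ p E 1 ≤ 1 := by
  simpa [indicatorModular] using prob_le_one

theorem chiNorm_le_of_indicatorModular_le (hp : ∀ᵐ ω ∂μ, 0 < p ω) (hE : MeasurableSet E)
    {lam : ℝ} (hlam : 0 < lam) (h : indicatorModular μ p E lam ≤ 1) : chiNorm μ p E ≤ lam := by
  rw [chiNorm_eq_sInf hp hE]
  exact csInf_le ⟨0, fun _ h => h.1.le⟩ ⟨hlam, h⟩

theorem chiNorm_le_one [IsProbabilityMeasure μ] (hp : ∀ᵐ ω ∂μ, 0 < p ω)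
    (hE : MeasurableSet E) : chiNorm μ p E ≤ 1 :=
  chiNorm_le_of_indicatorModular_le hp hE one_pos indicatorModular_one_le

theorem chiNorm_mono [IsProbabilityMeasure μ] (hp : ∀ᵐ ω ∂μ, 0 < p ω) {E' : Set Ω}
    (hE : MeasurableSet E) (hE' : MeasurableSet E') (h : E' ⊆ E) :
    chiNorm μ p E' ≤ chiNorm μ p E := by
  rw [chiNorm_eq_sInf hp hE, chiNorm_eq_sInf hp hE']
  exact csInf_le_csInf ⟨0, fun _ h => h.1.le⟩ ⟨1, one_pos, indicatorModular_one_le⟩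
    fun lam hlam => ⟨hlam.1, (lintegral_mono_set h).trans hlam.2⟩

theorem indicatorModular_mul_le {pu : ℝ} (hp : ∀ᵐ ω ∂μ, p ω ≤ pu) (E : Set Ω) {t lam : ℝ}
    (ht0 : 0 < t) (ht1 : t ≤ 1) (hlam : 0 ≤ lam) :
    indicatorModular μ p E (t * lam) ≤
      ENNReal.ofReal (t ^ (-pu)) * indicatorModular μ p E lam := by
  rw [indicatorModular, indicatorModular, ← lintegral_const_mul' _ _ ENNReal.ofReal_ne_top]
  refine lintegral_mono_ae ((ae_restrict_of_ae hp).mono fun ω hω => ?_)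
  rw [← ENNReal.ofReal_mul (by positivity)]
  refine ENNReal.ofReal_le_ofReal ?_
  calc (1 / (t * lam)) ^ p ω = t ^ (-p ω) * (1 / lam) ^ p ω := by
        rw [← one_div_mul_one_div, Real.mul_rpow (by positivity) (by positivity), one_div,
          Real.inv_rpow ht0.le, Real.rpow_neg ht0.le]
    _ ≤ t ^ (-pu) * (1 / lam) ^ p ω :=
        mul_le_mul_of_nonneg_right (Real.rpow_le_rpow_of_exponent_ge ht0 ht1 (neg_le_neg hω))
          (by positivity)

theorem chiNorm_rpow_le_of_indicatorModular_le {pu : ℝ} (hpu : 0 < pu)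
    (hp : ∀ᵐ ω ∂μ, 0 < p ω ∧ p ω ≤ pu) (hE : MeasurableSet E) {lam u : ℝ} (hlam : 0 < lam)
    (hu0 : 0 < u) (hu1 : u ≤ 1) (h : indicatorModular μ p E lam ≤ ENNReal.ofReal u) :
    chiNorm μ p E ^ pu ≤ u * lam ^ pu := by
  set t := u ^ pu⁻¹
  have ht : t ^ pu = u := Real.rpow_inv_rpow hu0.le hpu.ne'
  have ht0 : 0 < t := by positivity
  have hmod : indicatorModular μ p E (t * lam) ≤ 1 :=
    calc indicatorModular μ p E (t * lam)
        ≤ ENNReal.ofReal (t ^ (-pu)) * indicatorModular μ p E lam :=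
          indicatorModular_mul_le (hp.mono fun _ h => h.2) E ht0
            (Real.rpow_le_one hu0.le hu1 (by positivity)) hlam.le
      _ ≤ ENNReal.ofReal u⁻¹ * ENNReal.ofReal u := by
          rw [Real.rpow_neg ht0.le, ht]
          gcongr
      _ = 1 := by rw [← ENNReal.ofReal_mul (by positivity), inv_mul_cancel₀ hu0.ne', ofReal_one]
  calc chiNorm μ p E ^ pu
      ≤ (t * lam) ^ pu := by
        gcongr
        · exact chiNorm_nonneg
        · exact chiNorm_le_of_indicatorModular_le (hp.mono fun _ h => h.1) hE (by positivity) hmod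
    _ = u * lam ^ pu := by rw [Real.mul_rpow ht0.le hlam.le, ht]

theorem ofReal_chiNorm_rpow_le {pu : ℝ} (hpu : 0 < pu) (hp : ∀ᵐ ω ∂μ, 0 < p ω ∧ p ω ≤ pu)
    (hE : MeasurableSet E) {lam : ℝ} (hlam : 0 < lam) (h : indicatorModular μ p E lam ≤ 1) :
    ENNReal.ofReal (chiNorm μ p E ^ pu) ≤
      indicatorModular μ p E lam * ENNReal.ofReal (lam ^ pu) := by
  set m := indicatorModular μ p E lam
  have hm : m ≠ ∞ := ne_top_of_le_ne_top one_ne_top h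
  suffices key : chiNorm μ p E ^ pu / lam ^ pu ≤ m.toReal by
    rw [← ofReal_toReal hm, ← ENNReal.ofReal_mul toReal_nonneg]
    exact ENNReal.ofReal_le_ofReal ((div_le_iff₀ (by positivity)).1 key)
  refine le_of_forall_gt_imp_ge_of_dense fun u hu => ?_
  have hu0 : 0 < u := toReal_nonneg.trans_lt hu
  have hv0 : 0 < min u 1 := lt_min hu0 one_pos
  have hmv : m ≤ ENNReal.ofReal (min u 1) := by
    rw [ENNReal.ofReal_min, ofReal_one]
    exact le_min ((ENNReal.le_ofReal_iff_toReal_le hm hu0.le).2 hu.le) h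
  calc chiNorm μ p E ^ pu / lam ^ pu ≤ min u 1 := by
        rw [div_le_iff₀ (by positivity)]
        exact chiNorm_rpow_le_of_indicatorModular_le hpu hp hE hlam hv0 (min_le_right _ _) hmv
    _ ≤ u := min_le_left _ _

theorem tsum_ofReal_chiNorm_rpow_le [IsProbabilityMeasure μ] {pu : ℝ} (hpu : 0 < pu)
    (hp : ∀ᵐ ω ∂μ, 0 < p ω ∧ p ω ≤ pu) {A : ℕ → Set Ω} (hA : ∀ i, MeasurableSet (A i))
    (hd : Pairwise (Function.onFun Disjoint A)) :
    ∑' i, ENNReal.ofReal (chiNorm μ p (A i) ^ pu) ≤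
      ENNReal.ofReal (chiNorm μ p (⋃ i, A i) ^ pu) := by
  rw [chiNorm_eq_sInf (hp.mono fun _ h => h.1) (MeasurableSet.iUnion hA)]
  refine le_ofReal_sInf_rpow (by exact ⟨1, one_pos, indicatorModular_one_le⟩)
    (fun _ h => h.1.le) hpu.le fun lam hlam => ?_
  have hsplit : indicatorModular μ p (⋃ i, A i) lam = ∑' i, indicatorModular μ p (A i) lam :=
    lintegral_iUnion hA hd _
  calc ∑' i, ENNReal.ofReal (chiNorm μ p (A i) ^ pu)
      ≤ ∑' i, indicatorModular μ p (A i) lam * ENNReal.ofReal (lam ^ pu) :=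
        ENNReal.tsum_le_tsum fun i => ofReal_chiNorm_rpow_le hpu hp (hA i) hlam.1
          ((ENNReal.le_tsum i).trans (hsplit ▸ hlam.2))
    _ = indicatorModular μ p (⋃ i, A i) lam * ENNReal.ofReal (lam ^ pu) := by
        rw [hsplit, ENNReal.tsum_mul_right]
    _ ≤ ENNReal.ofReal (lam ^ pu) := mul_le_of_le_one_left' hlam.2

end IndicatorModular

/-- For `p₊ < θ < ∞` and pairwise disjoint measurable sets `(A_i)`,
`∑_i ‖χ_{A_i}‖^θ γ_b^θ(‖χ_{A_i}‖) ≲ ‖∑_i χ_{A_i}‖^θ γ_b^θ(‖∑_i χ_{A_i}‖)`. -/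
theorem chiNorm_tsum_lower (μ : Measure Ω) [IsProbabilityMeasure μ]
    (p : Ω → ℝ) (pl pu : ℝ) (hpl : 0 < pl) (hple : pl ≤ pu)
    (hp : ∀ᵐ ω ∂μ, pl ≤ p ω ∧ p ω ≤ pu)
    (b : ℝ → ℝ) (hb : SlowlyVarying b)
    (θ : ℝ) (hθp : pu < θ) :
    ∃ C > (0:ℝ), ∀ A : ℕ → Set Ω, (∀ i, MeasurableSet (A i)) →
      Pairwise (Function.onFun Disjoint A) →
      ∑' i, ENNReal.ofReal
          (chiNorm μ p (A i) ^ θ * gammaB b (chiNorm μ p (A i)) ^ θ) ≤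
        ENNReal.ofReal C *
          ENNReal.ofReal
            (vLpNorm μ p (fun ω => ∑' i, (A i).indicator (1 : Ω → ℝ) ω) ^ θ *
              gammaB b (vLpNorm μ p (fun ω => ∑' i, (A i).indicator (1 : Ω → ℝ) ω)) ^ θ) := by
  have hpu : 0 < pu := hpl.trans_le hple
  have hp' : ∀ᵐ ω ∂μ, 0 < p ω ∧ p ω ≤ pu := hp.mono fun _ h => ⟨hpl.trans_le h.1, h.2⟩
  have hp0 : ∀ᵐ ω ∂μ, 0 < p ω := hp'.mono fun _ h => h.1
  obtain ⟨K, hK, hKb⟩ := hb.exists_rpow_mul_gammaB_rpow_le hpu hθp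
  refine ⟨K, hK, fun A hA hd => ?_⟩
  have hU : MeasurableSet (⋃ i, A i) := MeasurableSet.iUnion hA
  rw [← indicator_iUnion_of_pairwise_disjoint A hd]
  change _ ≤ _ * ENNReal.ofReal
    (chiNorm μ p (⋃ i, A i) ^ θ * gammaB b (chiNorm μ p (⋃ i, A i)) ^ θ)
  set s := chiNorm μ p (⋃ i, A i)
  set B := K * (s ^ (θ - pu) * gammaB b s ^ θ)
  have hchi : ∀ i, chiNorm μ p (A i) ≤ s :=
    fun i => chiNorm_mono hp0 hU (hA i) (subset_iUnion A i)
  calc ∑' i, ENNReal.ofReal (chiNorm μ p (A i) ^ θ * gammaB b (chiNorm μ p (A i)) ^ θ)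
      ≤ ∑' i, ENNReal.ofReal B * ENNReal.ofReal (chiNorm μ p (A i) ^ pu) :=
        ENNReal.tsum_le_tsum fun i => by
          rw [← ENNReal.ofReal_mul' (Real.rpow_nonneg chiNorm_nonneg _)]
          exact ENNReal.ofReal_le_ofReal
            (hKb _ _ chiNorm_nonneg (hchi i) (chiNorm_le_one hp0 hU))
    _ = ENNReal.ofReal B * ∑' i, ENNReal.ofReal (chiNorm μ p (A i) ^ pu) := ENNReal.tsum_mul_left
    _ ≤ ENNReal.ofReal B * ENNReal.ofReal (s ^ pu) := by
        gcongr
        exact tsum_ofReal_chiNorm_rpow_le hpu hp' hA hd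
    _ = ENNReal.ofReal K * ENNReal.ofReal (s ^ θ * gammaB b s ^ θ) := by
        rw [← ENNReal.ofReal_mul' (Real.rpow_nonneg chiNorm_nonneg _), ← ENNReal.ofReal_mul hK.le,
          mul_assoc, mul_right_comm (s ^ (θ - pu)),
          ← Real.rpow_add' chiNorm_nonneg (by linarith), sub_add_cancel]
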